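/- arXiv:2209.00427 — 2 statements merged into one kernel-verified Lean document; each statement's English description precedes it below -/
import Mathlib

section
/- Let η : ℝ → [0,1] be measurable, X a real random variable with continuous CDF of η(X), and for γ ∈ (0,1) define the classifier g_γ(x) = 1 if F(η(x)) ≥ γ and 0 otherwise, where F is the CDF of η(X). Then E[g_γ(X)(1 − 2η(X))] = ∫_γ^1 (1 − 2F⁻¹(u)) du. -/
/-!
If `U` is uniform on `(0, 1)`, then `F⁻¹(U)` has the law of `η(X)` (quantile transform), so the
expectation can be computed with `F⁻¹(U)` in place of `η(X)`. Continuity of `F` gives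
`F(F⁻¹(u)) = u`, which turns the event `γ ≤ F(η(X))` into `γ ≤ U`.
-/

open MeasureTheory Set

open Filter

namespace ProbabilityTheory

/-- Meaningful for `p ∈ (0, 1)`: for `p ≤ 0` the set is unbounded below, for `p > 1` it is
empty, and `sInf` of either is `0`. -/
noncomputable def quantile (μ : Measure ℝ) (p : ℝ) : ℝ := sInf {x | p ≤ cdf μ x}

variable {μ : Measure ℝ}

lemma bddBelow_setOf_le_cdf {p : ℝ} (hp : 0 < p) : BddBelow {x | p ≤ cdf μ x} := by
  obtain ⟨a, ha⟩ := eventually_atBot.1 ((tendsto_cdf_atBot μ).eventually (gt_mem_nhds hp))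
  exact ⟨a, fun x hx => le_of_not_ge fun hxa => (ha x hxa).not_ge hx⟩

lemma nonempty_setOf_le_cdf {p : ℝ} (hp : p < 1) : {x | p ≤ cdf μ x}.Nonempty :=
  ((tendsto_cdf_atTop μ).eventually (lt_mem_nhds hp)).exists.imp fun _ => le_of_lt

lemma le_cdf_quantile {p : ℝ} (hp : p ∈ Ioo 0 1) : p ≤ cdf μ (quantile μ p) := by
  have hcont := ((cdf μ).right_continuous (quantile μ p)).mono Ioi_subset_Ici_self
  refine ge_of_tendsto hcont (eventually_nhdsWithin_of_forall fun x hx => ?_)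
  obtain ⟨s, hs, hsx⟩ := exists_lt_of_csInf_lt (nonempty_setOf_le_cdf hp.2) hx
  exact hs.trans (monotone_cdf μ hsx.le)

lemma quantile_le_iff {p : ℝ} (hp : p ∈ Ioo 0 1) {t : ℝ} :
    quantile μ p ≤ t ↔ p ≤ cdf μ t :=
  ⟨fun h => (le_cdf_quantile hp).trans (monotone_cdf μ h),
    fun h => csInf_le (bddBelow_setOf_le_cdf hp.1) h⟩

lemma monotoneOn_quantile : MonotoneOn (quantile μ) (Ioo 0 1) :=
  fun _ hp _ hq hpq => (quantile_le_iff hp).2 (hpq.trans (le_cdf_quantile hq))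

lemma cdf_quantile (hcont : Continuous (cdf μ)) {p : ℝ} (hp : p ∈ Ioo 0 1) :
    cdf μ (quantile μ p) = p := by
  have hbot := ((tendsto_cdf_atBot μ).eventually (gt_mem_nhds hp.1)).exists
  obtain ⟨x, hx⟩ := mem_range_of_exists_le_of_exists_ge hcont (hbot.imp fun _ => le_of_lt)
    (nonempty_setOf_le_cdf hp.2)
  exact (le_cdf_quantile hp).antisymm'
    ((monotone_cdf μ ((quantile_le_iff hp).2 hx.ge)).trans_eq hx)

lemma aemeasurable_quantile : AEMeasurable (quantile μ) (volume.restrict (Ioo 0 1)) :=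
  aemeasurable_restrict_of_monotoneOn measurableSet_Ioo monotoneOn_quantile

variable [IsProbabilityMeasure μ]

lemma map_quantile_volume_Ioo : (volume.restrict (Ioo 0 1)).map (quantile μ) = μ := by
  refine (Measure.ext_of_Iic μ _ fun t => ?_).symm
  have hpre : quantile μ ⁻¹' Iic t ∩ Ioo 0 1 = Iic (cdf μ t) ∩ Ioo 0 1 := by
    ext u
    simp only [mem_inter_iff, mem_preimage, mem_Iic]
    exact ⟨fun h => ⟨(quantile_le_iff h.2).1 h.1, h.2⟩,
      fun h => ⟨(quantile_le_iff h.2).2 h.1, h.2⟩⟩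
  rw [Measure.map_apply_of_aemeasurable aemeasurable_quantile measurableSet_Iic,
    Measure.restrict_apply' measurableSet_Ioo, hpre,
    measure_congr (ae_eq_set_inter (ae_eq_refl (Iic (cdf μ t))) Ioo_ae_eq_Ioc),
    Iic_inter_Ioc_of_le (cdf_le_one μ t), Real.volume_Ioc, sub_zero, ofReal_cdf]

lemma integral_comp_quantile {E : Type*} [NormedAddCommGroup E] [NormedSpace ℝ E] {g : ℝ → E}
    (hg : AEStronglyMeasurable g μ) : ∫ u in Ioo 0 1, g (quantile μ u) = ∫ x, g x ∂μ := by
  rw [← integral_map aemeasurable_quantile (by rwa [map_quantile_volume_Ioo]),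
    map_quantile_volume_Ioo]

end ProbabilityTheory

lemma setIntegral_Ioo_indicator_Ici {E : Type*} [NormedAddCommGroup E] [NormedSpace ℝ E]
    (f : ℝ → E) {a b γ : ℝ} (hγ : a < γ) :
    ∫ u in Ioo a b, (Ici γ).indicator f u = ∫ u in Ioo γ b, f u := by
  have hIco : Ioo a b ∩ Ici γ = Ico γ b := by
    ext u
    simp only [mem_inter_iff, mem_Ioo, mem_Ici, mem_Ico]
    exact ⟨fun h => ⟨h.2, h.1.2⟩, fun h => ⟨⟨hγ.trans_le h.1, h.2⟩, h.1⟩⟩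
  rw [setIntegral_indicator measurableSet_Ici, hIco]
  exact setIntegral_congr_set Ioo_ae_eq_Ico.symm

-- A plain `open ProbabilityTheory` would turn the binder name `ℙ` below into notation.
open ProbabilityTheory (cdf quantile monotone_cdf cdf_eq_real cdf_quantile integral_comp_quantile)

theorem stmt4_general {Ω : Type*} [MeasurableSpace Ω] (ℙ : Measure Ω) [IsProbabilityMeasure ℙ]
    (X : Ω → ℝ) (hX : Measurable X)
    (η : ℝ → ℝ) (hη : Measurable η)
    (F : ℝ → ℝ) (hF : F = fun t => (ℙ {ω | η (X ω) ≤ t}).toReal)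
    (hcont : Continuous F)
    (Finv : ℝ → ℝ) (hFinv : Finv = fun p => sInf {x | p ≤ F x})
    (γ : ℝ) (hγ : γ ∈ Ioo (0:ℝ) 1) :
    ∫ ω, (if γ ≤ F (η (X ω)) then (1:ℝ) else 0) * (1 - 2 * η (X ω)) ∂ℙ
      = ∫ u in Ioo γ 1, (1 - 2 * Finv u) := by
  have hY : Measurable fun ω => η (X ω) := hη.comp hX
  set μ := ℙ.map fun ω => η (X ω)
  have : IsProbabilityMeasure μ := Measure.isProbabilityMeasure_map hY.aemeasurable
  have hFμ : F = cdf μ := by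
    ext t
    rw [hF, cdf_eq_real, map_measureReal_apply hY measurableSet_Iic]
    rfl
  have hFinvμ : Finv = quantile μ := by rw [hFinv, hFμ]; rfl
  rw [hFμ] at hcont
  rw [hFinvμ, hFμ]
  have hg : Measurable fun y => (if γ ≤ cdf μ y then (1:ℝ) else 0) * (1 - 2 * y) :=
    (measurable_const.ite (measurableSet_le measurable_const (monotone_cdf μ).measurable)
      measurable_const).mul (by fun_prop)
  calc _ = ∫ y, (if γ ≤ cdf μ y then (1:ℝ) else 0) * (1 - 2 * y) ∂μ :=
        (integral_map hY.aemeasurable hg.aestronglyMeasurable).symm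
    _ = ∫ u in Ioo 0 1,
          (if γ ≤ cdf μ (quantile μ u) then (1:ℝ) else 0) * (1 - 2 * quantile μ u) :=
        (integral_comp_quantile hg.aestronglyMeasurable).symm
    _ = ∫ u in Ioo 0 1, (Ici γ).indicator (fun u => 1 - 2 * quantile μ u) u :=
        setIntegral_congr_fun measurableSet_Ioo fun u hu => by
          by_cases h : γ ≤ u <;> simp [cdf_quantile hcont hu, h]
    _ = ∫ u in Ioo γ 1, (1 - 2 * quantile μ u) := setIntegral_Ioo_indicator_Ici _ hγ.1

/-- Risk of the rank-thresholded classifier `g_γ = 1{F(η(X)) ≥ γ}`: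
`E[g_γ(X)(1 − 2η(X))] = ∫_γ^1 (1 − 2F⁻¹(u)) du`. -/
theorem stmt4 {Ω : Type*} [MeasurableSpace Ω] (ℙ : Measure Ω) [IsProbabilityMeasure ℙ]
    (X : Ω → ℝ) (hX : Measurable X)
    (η : ℝ → ℝ) (hη : Measurable η) (hη01 : ∀ x, η x ∈ Icc (0:ℝ) 1)
    (F : ℝ → ℝ) (hF : F = fun t => (ℙ {ω | η (X ω) ≤ t}).toReal)
    (hcont : Continuous F)
    (Finv : ℝ → ℝ) (hFinv : Finv = fun p => sInf {x | p ≤ F x})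
    (γ : ℝ) (hγ : γ ∈ Ioo (0:ℝ) 1) :
    ∫ ω, (if γ ≤ F (η (X ω)) then (1:ℝ) else 0) * (1 - 2 * η (X ω)) ∂ℙ
      = ∫ u in Ioo γ 1, (1 - 2 * Finv u) :=
  stmt4_general ℙ X hX η hη F hF hcont Finv hFinv γ hγ
end

section
/- Continuity of the sublevel probability: let V be a random vector in ℝ^{K+1} such that for every u in a compact set H₀ ⊂ ℝ^{K+1} the law of ⟨u, V⟩ is continuous (atomless). Then the function (u,t) ↦ P(|⟨u,V⟩| ≤ t) is jointly continuous on H₀ × (0,∞), and t ↦ sup_{u ∈ H₀} P(|⟨u,V⟩| ≤ t) is continuous on [0,∞). -/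
/-!
Fix `u` and `t`. For every `ω` with `|⟪u, V ω⟫| ≠ t` the indicator of `{|⟪u', V ω⟫| ≤ t'}` is
locally constant in `(u', t')` near `(u, t)`, and the atomlessness of `⟪u, V⟫` makes this hold
for almost every `ω`; dominated convergence then gives continuity of the sublevel probability at
`(u, t)`. The supremum over the compact set `H₀` of a jointly continuous function is continuous.
-/

open MeasureTheory Set Filter Topology RealInnerProductSpace

theorem continuousAt_measure_setOf_nonpos {P Ω : Type*} [TopologicalSpace P]
    [FirstCountableTopology P] [MeasurableSpace Ω] {μ : Measure Ω} [IsFiniteMeasure μ]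
    {G : P → Ω → ℝ} {p₀ : P} (hG : ∀ p, Measurable (G p))
    (hGc : ∀ ω, ContinuousAt (G · ω) p₀) (hnull : μ {ω | G p₀ ω = 0} = 0) :
    ContinuousAt (fun p => μ {ω | G p ω ≤ 0}) p₀ := by
  refine tendsto_measure_of_ae_tendsto_indicator_of_isFiniteMeasure (𝓝 p₀)
    (measurableSet_le (hG p₀) measurable_const) (fun p => measurableSet_le (hG p) measurable_const)
    ?_
  filter_upwards [measure_eq_zero_iff_ae_notMem.mp hnull] with ω hω
  rcases lt_or_gt_of_ne (hω : G p₀ ω ≠ 0) with hneg | hpos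
  · filter_upwards [(hGc ω).eventually (gt_mem_nhds hneg)] with p hp
    simp only [hp.le, hneg.le]
  · filter_upwards [(hGc ω).eventually (lt_mem_nhds hpos)] with p hp
    simp only [not_le.mpr hp, not_le.mpr hpos]

theorem continuousAt_measure_abs_inner_le {Ω E : Type*} [MeasurableSpace Ω] {μ : Measure Ω}
    [IsFiniteMeasure μ] [NormedAddCommGroup E] [InnerProductSpace ℝ E] [MeasurableSpace E]
    [OpensMeasurableSpace E] {V : Ω → E} (hV : Measurable V) {u : E}
    (hatom : ∀ c : ℝ, μ {ω | ⟪u, V ω⟫ = c} = 0) (t : ℝ) :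
    ContinuousAt (fun q : E × ℝ => (μ {ω | |⟪q.1, V ω⟫| ≤ q.2}).toReal) (u, t) := by
  have hnull : μ {ω | |⟪u, V ω⟫| - t = 0} = 0 :=
    measure_mono_null (fun ω hω => eq_or_eq_neg_of_abs_eq (sub_eq_zero.mp hω))
      (measure_union_null (hatom t) (hatom (-t)))
  have hG := continuousAt_measure_setOf_nonpos (μ := μ) (p₀ := (u, t))
    (G := fun q ω => |⟪q.1, V ω⟫| - q.2)
    (fun q => ((innerSL ℝ q.1).continuous.measurable.comp hV).abs.sub_const q.2)
    (fun ω => by fun_prop) hnull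
  simp only [sub_nonpos] at hG
  exact ContinuousAt.comp (g := ENNReal.toReal)
    (ENNReal.continuousAt_toReal (measure_ne_top _ _)) hG

theorem IsCompact.continuous_iSup_of_continuousOn_prod {α β γ : Type*}
    [ConditionallyCompleteLinearOrder α] [TopologicalSpace α] [OrderTopology α]
    [TopologicalSpace β] [TopologicalSpace γ] {K : Set β} (hK : IsCompact K) {F : β → γ → α}
    (hF : ContinuousOn (fun q : β × γ => F q.1 q.2) (K ×ˢ univ)) :
    Continuous fun x => ⨆ u : K, F u x := by
  have : CompactSpace K := isCompact_iff_compactSpace.mp hK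
  have hF' : Continuous fun p : γ × K => F p.2 p.1 :=
    hF.comp_continuous (f := fun p : γ × K => ((p.2 : β), p.1)) (by fun_prop)
      fun p => ⟨p.2.2, mem_univ _⟩
  have hsup := isCompact_univ.continuous_sSup (f := fun x (u : K) => F u x) hF'
  simp only [image_univ] at hsup
  exact hsup

/-- Continuity of the sublevel probability `(u,t) ↦ P(|⟨u,V⟩| ≤ t)` on `H₀ × (0,∞)` and of
`t ↦ sup_{u ∈ H₀} P(|⟨u,V⟩| ≤ t)` on `[0,∞)`, for atomless laws `⟨u,V⟩`. -/
theorem stmt19 {Ω : Type*} [MeasurableSpace Ω] (ℙ : Measure Ω) [IsProbabilityMeasure ℙ]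
    {K : ℕ} (V : Ω → EuclideanSpace ℝ (Fin (K + 1))) (hV : Measurable V)
    (H₀ : Set (EuclideanSpace ℝ (Fin (K + 1)))) (hcomp : IsCompact H₀)
    (hatom : ∀ u ∈ H₀, ∀ c : ℝ, ℙ {ω | ⟪u, V ω⟫ = c} = 0)
    (F : EuclideanSpace ℝ (Fin (K + 1)) → ℝ → ℝ)
    (hFdef : F = fun u t => (ℙ {ω | |⟪u, V ω⟫| ≤ t}).toReal) :
    ContinuousOn (fun q : EuclideanSpace ℝ (Fin (K + 1)) × ℝ => F q.1 q.2) (H₀ ×ˢ Ioi 0)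
    ∧ ContinuousOn (fun t => ⨆ u : H₀, F (u : EuclideanSpace ℝ (Fin (K + 1))) t)
        (Ici (0:ℝ)) := by
  have hjoint : ContinuousOn (fun q : EuclideanSpace ℝ (Fin (K + 1)) × ℝ => F q.1 q.2)
      (H₀ ×ˢ univ) := fun q hq => by
    subst hFdef
    exact (continuousAt_measure_abs_inner_le hV (hatom q.1 hq.1) q.2).continuousWithinAt
  exact ⟨hjoint.mono (prod_mono subset_rfl (subset_univ _)),
    (hcomp.continuous_iSup_of_continuousOn_prod hjoint).continuousOn⟩
end
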